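/- Let M be a finite MDP with alarm region, x_0 an initial state, B ⊆ X, and Δ ∈ [0,1]. Then the supremum of J_M(π) over all Markov policies π of M satisfying P^π(X_T ∈ B) ≤ Δ equals the optimal value of the following linear program over nonnegative variables ρ_t(x,a) for 0 ≤ t ≤ T−1 and ρ_T(x): maximize Σ_{t=0}^{T−1} Σ_{x∈X,a∈A} r_t(x,a)·ρ_t(x,a) + Σ_{x∈X} r_T(x)·ρ_T(x) subject to (i) Σ_{a∈A} ρ_0(x,a) = 1 if x = x_0 and 0 otherwise; (ii) Σ_{a∈A} ρ_t(x,a) = Σ_{x̄∈X,a∈A} P(x|x̄,a)·ρ_{t−1}(x̄,a) for 1 ≤ t ≤ T−1 and all x; (iii) ρ_T(x) = Σ_{x̄∈X,a∈A} P(x|x̄,a)·ρ_{T−1}(x̄,a) for all x; (iv) all variables lie in [0,1]; and (v) Σ_{x∈B} ρ_T(x) ≤ Δ. -/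
import Mathlib


/- Common framework: finite MDPs with alarm region, trajectories,
   history-dependent policies, trajectory laws, objectives. -/

attribute [local instance] Classical.propDecidable

noncomputable section

/-- A finite MDP with alarm region `Xa`, horizon `T ≥ 1`, transition pmf `P`,
running rewards `r` and terminal reward `rT`. -/
structure MDP (X A : Type) [Fintype X] [Fintype A] where
  T : ℕ
  hT : 1 ≤ T
  P : X → A → X → ℝ
  P_nonneg : ∀ x a x', 0 ≤ P x a x'
  P_sum : ∀ x a, ∑ x', P x a x' = 1
  r : Fin T → X → A → ℝ
  rT : X → ℝ
  Xa : Set X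

variable {X A : Type} [Fintype X] [Fintype A]

/-- A trajectory `(x₀,…,x_T, a₀,…,a_{T-1})`. -/
abbrev Traj (M : MDP X A) := (Fin (M.T + 1) → X) × (Fin M.T → A)

/-- A history-dependent randomized policy: at each time `t < T` it maps the
history `(x₀,…,x_t, a₀,…,a_{t-1})` to a pmf on actions. -/
structure HistPolicy (M : MDP X A) where
  π : (t : Fin M.T) → (Fin (t.val + 1) → X) → (Fin t.val → A) → A → ℝ
  nonneg : ∀ t xs as a, 0 ≤ π t xs as a
  sum_one : ∀ t xs as, ∑ a, π t xs as a = 1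

/-- A policy is Markov if at each time it depends only on the current state. -/
def IsMarkov {M : MDP X A} (p : HistPolicy M) : Prop :=
  ∀ (t : Fin M.T) (xs xs' : Fin (t.val + 1) → X) (as as' : Fin t.val → A),
    xs (Fin.last t.val) = xs' (Fin.last t.val) → p.π t xs as = p.π t xs' as'

/-- The state part of the history at time `t` determined by a trajectory. -/
def histStates {M : MDP X A} (τ : Traj M) (t : Fin M.T) : Fin (t.val + 1) → X :=
  fun i => τ.1 (Fin.castLE (by have := t.isLt; omega) i)

/-- The action part of the history at time `t` determined by a trajectory. -/
def histActs {M : MDP X A} (τ : Traj M) (t : Fin M.T) : Fin t.val → A :=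
  fun i => τ.2 (Fin.castLE (by have := t.isLt; omega) i)

/-- The probability mass of a trajectory under policy `p` with initial state `x0`. -/
def trajProb (M : MDP X A) (p : HistPolicy M) (x0 : X) (τ : Traj M) : ℝ :=
  (if τ.1 0 = x0 then (1 : ℝ) else 0) *
    ∏ t : Fin M.T,
      p.π t (histStates τ t) (histActs τ t) (τ.2 t) *
        M.P (τ.1 t.castSucc) (τ.2 t) (τ.1 t.succ)

/-- Probability of an event (a set of trajectories) under the trajectory law. -/
def probEvent (M : MDP X A) (p : HistPolicy M) (x0 : X) (E : Traj M → Prop) : ℝ :=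
  ∑ τ : Traj M, if E τ then trajProb M p x0 τ else 0

/-- The objective `J_M(π) = E[Σ_t r_t(X_t,A_t) + r_T(X_T)]`. -/
def J (M : MDP X A) (p : HistPolicy M) (x0 : X) : ℝ :=
  ∑ τ : Traj M, trajProb M p x0 τ *
    (∑ t : Fin M.T, M.r t (τ.1 t.castSucc) (τ.2 t) + M.rT (τ.1 (Fin.last M.T)))


/-- Forward state marginals for step kernels `w t x a x'`. -/
def muF (w : ℕ → X → A → X → ℝ) (x0 : X) : ℕ → X → ℝ
  | 0 => fun x => if x = x0 then 1 else 0
  | (t+1) => fun x => ∑ x' : X, ∑ a : A, muF w x0 t x' * w t x' a x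

lemma muF_nonneg (w : ℕ → X → A → X → ℝ) (hw0 : ∀ t x a x', 0 ≤ w t x a x')
    (x0 : X) : ∀ t x, 0 ≤ muF w x0 t x := by
  intro t
  induction t with
  | zero => intro x; simp only [muF]; positivity
  | succ t ih =>
    intro x
    apply Finset.sum_nonneg; intro x' _
    apply Finset.sum_nonneg; intro a _
    exact mul_nonneg (ih x') (hw0 t x' a x)

lemma muF_mass (w : ℕ → X → A → X → ℝ)
    (hw : ∀ t x, ∑ a : A, ∑ x' : X, w t x a x' = 1) (x0 : X) :
    ∀ t, ∑ x : X, muF w x0 t x = 1 := by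
  intro t
  induction t with
  | zero => simp [muF]
  | succ t ih =>
    simp only [muF]
    rw [Finset.sum_comm]
    calc ∑ x' : X, ∑ x : X, ∑ a : A, muF w x0 t x' * w t x' a x
        = ∑ x' : X, muF w x0 t x' * (∑ a : A, ∑ x : X, w t x' a x) := by
          apply Finset.sum_congr rfl; intro x' _
          rw [Finset.mul_sum, Finset.sum_comm]
          apply Finset.sum_congr rfl; intro x _
          rw [Finset.mul_sum]
      _ = ∑ x' : X, muF w x0 t x' := by
          apply Finset.sum_congr rfl; intro x' _
          rw [hw t x', mul_one]
      _ = 1 := ih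


lemma sum4_swap (F : X → A → X → A → ℝ) :
    ∑ x' : X, ∑ a : A, ∑ x1 : X, ∑ b : A, F x' a x1 b
      = ∑ x1 : X, ∑ b : A, ∑ x' : X, ∑ a : A, F x' a x1 b := by
  calc ∑ x' : X, ∑ a : A, ∑ x1 : X, ∑ b : A, F x' a x1 b
      = ∑ x' : X, ∑ x1 : X, ∑ a : A, ∑ b : A, F x' a x1 b :=
        Finset.sum_congr rfl (fun _ _ => Finset.sum_comm)
    _ = ∑ x1 : X, ∑ x' : X, ∑ a : A, ∑ b : A, F x' a x1 b := Finset.sum_comm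
    _ = ∑ x1 : X, ∑ x' : X, ∑ b : A, ∑ a : A, F x' a x1 b :=
        Finset.sum_congr rfl (fun _ _ => Finset.sum_congr rfl (fun _ _ => Finset.sum_comm))
    _ = ∑ x1 : X, ∑ b : A, ∑ x' : X, ∑ a : A, F x' a x1 b :=
        Finset.sum_congr rfl (fun _ _ => Finset.sum_comm)

lemma muF_shift (w : ℕ → X → A → X → ℝ) (x0 : X) :
    ∀ t x, muF w x0 (t+1) x
      = ∑ x1 : X, ∑ a : A, w 0 x0 a x1 * muF (fun s => w (s+1)) x1 t x := by
  intro t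
  induction t with
  | zero =>
    intro x
    simp only [muF]
    simp [ite_mul, mul_ite]
  | succ t ih =>
    intro x
    show ∑ x' : X, ∑ a : A, muF w x0 (t+1) x' * w (t+1) x' a x = _
    calc ∑ x' : X, ∑ a : A, muF w x0 (t+1) x' * w (t+1) x' a x
        = ∑ x' : X, ∑ a : A, (∑ x1 : X, ∑ b : A,
            w 0 x0 b x1 * muF (fun s => w (s+1)) x1 t x') * w (t+1) x' a x := by
          simp only [ih]
      _ = ∑ x1 : X, ∑ b : A, w 0 x0 b x1 *
            (∑ x' : X, ∑ a : A, muF (fun s => w (s+1)) x1 t x' * w (t+1) x' a x) := by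
          simp only [Finset.sum_mul]
          rw [sum4_swap (fun x' a x1 b =>
            (w 0 x0 b x1 * muF (fun s => w (s+1)) x1 t x') * w (t+1) x' a x)]
          simp only [Finset.mul_sum, mul_assoc]
      _ = ∑ x1 : X, ∑ b : A, w 0 x0 b x1 * muF (fun s => w (s+1)) x1 (t+1) x := by
          rfl

lemma key_ind {β : Type} [Fintype β] (e : β → X) (H : X → β → ℝ) :
    ∑ b : β, H (e b) b = ∑ x1 : X, ∑ b : β, (if e b = x1 then (1:ℝ) else 0) * H x1 b := by
  rw [Finset.sum_comm]
  apply Finset.sum_congr rfl; intro b _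
  simp [ite_mul, Finset.sum_ite_eq]

def pathSum (n : ℕ) (w : ℕ → X → A → X → ℝ) (c : ℕ → X → A → ℝ)
    (f : X → ℝ) (x0 : X) : ℝ :=
  ∑ xs : Fin (n+1) → X, ∑ as : Fin n → A,
    (if xs 0 = x0 then (1:ℝ) else 0) *
      (∏ t : Fin n, w t (xs t.castSucc) (as t) (xs t.succ)) *
      ((∑ t : Fin n, c t (xs t.castSucc) (as t)) + f (xs (Fin.last n)))

lemma pathSum_succ (n : ℕ) (w : ℕ → X → A → X → ℝ) (c : ℕ → X → A → ℝ)
    (f : X → ℝ) (x0 : X) :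
    pathSum (n+1) w c f x0
      = ∑ a : A, ∑ x1 : X, w 0 x0 a x1 *
          pathSum n (fun s => w (s+1)) (fun s => c (s+1)) (fun y => c 0 x0 a + f y) x1 := by
  have hsplit : ∀ (g : (Fin (n+2) → X) → ℝ),
      ∑ xs : Fin (n+2) → X, g xs = ∑ x : X, ∑ ys : Fin (n+1) → X, g (Fin.cons x ys) := by
    intro g
    rw [← (Fin.consEquiv (fun _ : Fin (n+2) => X)).sum_comp g, Fintype.sum_prod_type]
    rfl
  have hsplitA : ∀ (g : (Fin (n+1) → A) → ℝ),
      ∑ as : Fin (n+1) → A, g as = ∑ a : A, ∑ as' : Fin n → A, g (Fin.cons a as') := by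
    intro g
    rw [← (Fin.consEquiv (fun _ : Fin (n+1) => A)).sum_comp g, Fintype.sum_prod_type]
    rfl
  rw [pathSum, hsplit, Finset.sum_eq_single x0 ?h1 ?h2]
  case h1 =>
    intro b _ hb
    simp [Fin.cons_zero, hb]
  case h2 =>
    intro h; exact absurd (Finset.mem_univ x0) h
  simp only [hsplitA]
  simp only [Fin.cons_zero, Fin.prod_univ_succ, Fin.sum_univ_succ, Fin.castSucc_zero,
    Fin.cons_succ, ← Fin.succ_castSucc, ← Fin.succ_last, Fin.val_succ, Fin.val_zero,
    eq_self_iff_true, if_true, one_mul]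
  rw [Finset.sum_comm]
  apply Finset.sum_congr rfl; intro a _
  calc ∑ ys : Fin (n+1) → X, ∑ as' : Fin n → A,
        w 0 x0 a (ys 0) *
          (∏ t : Fin n, w (↑t+1) (ys t.castSucc) (as' t) (ys t.succ)) *
          ((c 0 x0 a + ∑ t : Fin n, c (↑t+1) (ys t.castSucc) (as' t)) + f (ys (Fin.last n)))
      = ∑ x1 : X, ∑ ys : Fin (n+1) → X,
          (if ys 0 = x1 then (1:ℝ) else 0) *
            (∑ as' : Fin n → A,
              w 0 x0 a x1 *
                (∏ t : Fin n, w (↑t+1) (ys t.castSucc) (as' t) (ys t.succ)) *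
                ((c 0 x0 a + ∑ t : Fin n, c (↑t+1) (ys t.castSucc) (as' t)) + f (ys (Fin.last n)))) := by
        exact key_ind (fun ys : Fin (n+1) → X => ys 0) (fun (v : X) (ys : Fin (n+1) → X) => ∑ as' : Fin n → A,
          w 0 x0 a v *
            (∏ t : Fin n, w (↑t+1) (ys t.castSucc) (as' t) (ys t.succ)) *
            ((c 0 x0 a + ∑ t : Fin n, c (↑t+1) (ys t.castSucc) (as' t)) + f (ys (Fin.last n))))
    _ = ∑ x1 : X, w 0 x0 a x1 * ∑ ys : Fin (n+1) → X, ∑ as' : Fin n → A,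
          (if ys 0 = x1 then (1:ℝ) else 0) *
            (∏ t : Fin n, w (↑t+1) (ys t.castSucc) (as' t) (ys t.succ)) *
            ((∑ t : Fin n, c (↑t+1) (ys t.castSucc) (as' t)) + (c 0 x0 a + f (ys (Fin.last n)))) := by
        apply Finset.sum_congr rfl; intro x1 _
        rw [Finset.mul_sum]
        apply Finset.sum_congr rfl; intro ys _
        rw [Finset.mul_sum, Finset.mul_sum]
        apply Finset.sum_congr rfl; intro as' _
        ring
    _ = ∑ x1 : X, w 0 x0 a x1 *
          pathSum n (fun s => w (s+1)) (fun s => c (s+1)) (fun y => c 0 x0 a + f y) x1 := rfl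

lemma master (n : ℕ) (w : ℕ → X → A → X → ℝ)
    (hw : ∀ t x, ∑ a : A, ∑ x' : X, w t x a x' = 1)
    (c : ℕ → X → A → ℝ) (f : X → ℝ) (x0 : X) :
    pathSum n w c f x0
    = (∑ t ∈ Finset.range n, ∑ x : X, ∑ a : A,
        muF w x0 t x * (∑ x' : X, w t x a x') * c t x a)
      + ∑ x : X, muF w x0 n x * f x := by
  induction n generalizing w c f x0 with
  | zero =>
    rw [pathSum, ← (Equiv.funUnique (Fin 1) X).symm.sum_comp]
    simp [muF, ite_mul, Finset.sum_ite_eq']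
  | succ n ih =>
    rw [pathSum_succ]
    have hw' : ∀ t x, ∑ a : A, ∑ x' : X, w (t+1) x a x' = 1 := fun t x => hw (t+1) x
    calc ∑ a : A, ∑ x1 : X, w 0 x0 a x1 *
            pathSum n (fun s => w (s+1)) (fun s => c (s+1)) (fun y => c 0 x0 a + f y) x1
        = ∑ a : A, ∑ x1 : X, w 0 x0 a x1 *
            ((∑ t ∈ Finset.range n, ∑ x : X, ∑ b : A,
              muF (fun s => w (s+1)) x1 t x * (∑ x' : X, w (t+1) x b x') * c (t+1) x b)
             + (c 0 x0 a + ∑ x : X, muF (fun s => w (s+1)) x1 n x * f x)) := by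
          apply Finset.sum_congr rfl; intro a _
          apply Finset.sum_congr rfl; intro x1 _
          rw [ih _ hw']
          congr 1
          have hmass := muF_mass (fun s => w (s+1)) hw' x1 n
          have hsplit2 : ∑ x : X, muF (fun s => w (s+1)) x1 n x * (c 0 x0 a + f x)
              = c 0 x0 a * (∑ x : X, muF (fun s => w (s+1)) x1 n x)
                + ∑ x : X, muF (fun s => w (s+1)) x1 n x * f x := by
            rw [Finset.mul_sum, ← Finset.sum_add_distrib]
            apply Finset.sum_congr rfl; intro x _
            ring
          rw [hsplit2, hmass, mul_one]
      _ = (∑ t ∈ Finset.range (n+1), ∑ x : X, ∑ b : A,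
            muF w x0 t x * (∑ x' : X, w t x b x') * c t x b)
          + ∑ x : X, muF w x0 (n+1) x * f x := by
          rw [Finset.sum_range_succ']
          -- three groups
          have hG2 : ∑ x : X, ∑ b : A, muF w x0 0 x * (∑ x' : X, w 0 x b x') * c 0 x b
              = ∑ a : A, ∑ x1 : X, w 0 x0 a x1 * c 0 x0 a := by
            show ∑ x : X, ∑ b : A, (if x = x0 then (1:ℝ) else 0) * (∑ x' : X, w 0 x b x') * c 0 x b = _
            simp only [ite_mul, one_mul, zero_mul]
            rw [Finset.sum_comm]
            apply Finset.sum_congr rfl; intro a _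
            rw [Finset.sum_ite_eq' Finset.univ x0
              (fun x => (∑ x' : X, w 0 x a x') * c 0 x a)]
            simp [Finset.sum_mul]
          have hG1 : ∀ t,
              (∑ x : X, ∑ b : A, muF w x0 (t+1) x * (∑ x' : X, w (t+1) x b x') * c (t+1) x b)
              = ∑ a : A, ∑ x1 : X, w 0 x0 a x1 *
                  (∑ x : X, ∑ b : A,
                    muF (fun s => w (s+1)) x1 t x * (∑ x' : X, w (t+1) x b x') * c (t+1) x b) := by
            intro t
            calc ∑ x : X, ∑ b : A, muF w x0 (t+1) x * (∑ x' : X, w (t+1) x b x') * c (t+1) x b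
                = ∑ x : X, ∑ b : A, ∑ x1 : X, ∑ a : A,
                    (w 0 x0 a x1 * muF (fun s => w (s+1)) x1 t x)
                      * ((∑ x' : X, w (t+1) x b x') * c (t+1) x b) := by
                  apply Finset.sum_congr rfl; intro x _
                  apply Finset.sum_congr rfl; intro b _
                  rw [muF_shift, mul_assoc, Finset.sum_mul]
                  apply Finset.sum_congr rfl; intro x1 _
                  rw [Finset.sum_mul]
              _ = ∑ x1 : X, ∑ a : A, ∑ x : X, ∑ b : A,
                    (w 0 x0 a x1 * muF (fun s => w (s+1)) x1 t x)
                      * ((∑ x' : X, w (t+1) x b x') * c (t+1) x b) :=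
                  sum4_swap _
              _ = ∑ a : A, ∑ x1 : X, w 0 x0 a x1 *
                   (∑ x : X, ∑ b : A,
                    muF (fun s => w (s+1)) x1 t x * (∑ x' : X, w (t+1) x b x') * c (t+1) x b) := by
                  rw [Finset.sum_comm]
                  apply Finset.sum_congr rfl; intro a _
                  apply Finset.sum_congr rfl; intro x1 _
                  rw [Finset.mul_sum]
                  apply Finset.sum_congr rfl; intro x _
                  rw [Finset.mul_sum]
                  apply Finset.sum_congr rfl; intro b _
                  ring
          have hG3 : (∑ x : X, muF w x0 (n+1) x * f x)
              = ∑ a : A, ∑ x1 : X, w 0 x0 a x1 *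
                  (∑ x : X, muF (fun s => w (s+1)) x1 n x * f x) := by
            calc ∑ x : X, muF w x0 (n+1) x * f x
                = ∑ x : X, ∑ x1 : X, ∑ a : A,
                    (w 0 x0 a x1 * muF (fun s => w (s+1)) x1 n x) * f x := by
                  apply Finset.sum_congr rfl; intro x _
                  rw [muF_shift, Finset.sum_mul]
                  apply Finset.sum_congr rfl; intro x1 _
                  rw [Finset.sum_mul]
              _ = ∑ x1 : X, ∑ a : A, ∑ x : X,
                    (w 0 x0 a x1 * muF (fun s => w (s+1)) x1 n x) * f x := by
                  rw [Finset.sum_comm]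
                  apply Finset.sum_congr rfl; intro x1 _
                  rw [Finset.sum_comm]
              _ = ∑ a : A, ∑ x1 : X, w 0 x0 a x1 *
                    (∑ x : X, muF (fun s => w (s+1)) x1 n x * f x) := by
                  rw [Finset.sum_comm]
                  apply Finset.sum_congr rfl; intro a _
                  apply Finset.sum_congr rfl; intro x1 _
                  rw [Finset.mul_sum]
                  apply Finset.sum_congr rfl; intro x _
                  ring
          rw [hG2, hG3]
          conv_rhs => rw [Finset.sum_congr rfl (fun t _ => hG1 t)]
          -- now everything is of the form ∑ a ∑ x1 w0 * (...)
          have hswap : ∀ (G : ℕ → A → X → ℝ),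
              ∑ t ∈ Finset.range n, ∑ a : A, ∑ x1 : X, G t a x1
                = ∑ a : A, ∑ x1 : X, ∑ t ∈ Finset.range n, G t a x1 := by
            intro G
            rw [Finset.sum_comm]
            apply Finset.sum_congr rfl; intro a _
            rw [Finset.sum_comm]
          rw [hswap]
          rw [← Finset.sum_add_distrib, ← Finset.sum_add_distrib]
          apply Finset.sum_congr rfl; intro a _
          rw [← Finset.sum_add_distrib, ← Finset.sum_add_distrib]
          apply Finset.sum_congr rfl; intro x1 _
          rw [← Finset.mul_sum]
          ring

lemma single_le_one_of_sum (g : X → A → ℝ) (hg : ∀ x a, 0 ≤ g x a)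
    (hsum : ∑ x : X, ∑ a : A, g x a = 1) (x : X) (a : A) : g x a ≤ 1 := by
  calc g x a ≤ ∑ b : A, g x b :=
        Finset.single_le_sum (fun b _ => hg x b) (Finset.mem_univ a)
    _ ≤ ∑ y : X, ∑ b : A, g y b :=
        Finset.single_le_sum (f := fun y => ∑ b : A, g y b)
          (fun y _ => Finset.sum_nonneg fun b _ => hg y b) (Finset.mem_univ x)
    _ = 1 := hsum


lemma histStates_last {M : MDP X A} (τ : Traj M) (t : Fin M.T) :
    histStates τ t (Fin.last t.val) = τ.1 t.castSucc := rfl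

section Bridge

variable (M : MDP X A) (p : HistPolicy M) (x0 : X)
variable (piN : ℕ → X → A → ℝ)

/-- combined kernel -/
def wOf : ℕ → X → A → X → ℝ := fun t x a x' => piN t x a * M.P x a x'

/-- running reward as a ℕ-indexed function -/
def cOf : ℕ → X → A → ℝ := fun t x a => if h : t < M.T then M.r ⟨t, h⟩ x a else 0

lemma wOf_mass (hsum : ∀ t x, ∑ a : A, piN t x a = 1) :
    ∀ t x, ∑ a : A, ∑ x' : X, wOf M piN t x a x' = 1 := by
  intro t x
  have : ∀ a : A, ∑ x' : X, wOf M piN t x a x' = piN t x a := by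
    intro a
    simp only [wOf]
    rw [← Finset.mul_sum, M.P_sum, mul_one]
  simp only [this]
  exact hsum t x

lemma trajProb_eq
    (hcompat : ∀ (t : Fin M.T) (τ : Traj M),
      p.π t (histStates τ t) (histActs τ t) (τ.2 t) = piN ↑t (τ.1 t.castSucc) (τ.2 t))
    (τ : Traj M) :
    trajProb M p x0 τ = (if τ.1 0 = x0 then (1 : ℝ) else 0) *
      ∏ t : Fin M.T, wOf M piN ↑t (τ.1 t.castSucc) (τ.2 t) (τ.1 t.succ) := by
  rw [trajProb]
  congr 1
  apply Finset.prod_congr rfl; intro t _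
  rw [hcompat t τ]
  rfl

lemma J_eq
    (hcompat : ∀ (t : Fin M.T) (τ : Traj M),
      p.π t (histStates τ t) (histActs τ t) (τ.2 t) = piN ↑t (τ.1 t.castSucc) (τ.2 t)) :
    J M p x0 = pathSum M.T (wOf M piN) (cOf M) M.rT x0 := by
  rw [J, pathSum, Fintype.sum_prod_type]
  apply Finset.sum_congr rfl; intro xs _
  apply Finset.sum_congr rfl; intro as _
  rw [trajProb_eq M p x0 piN hcompat (xs, as)]
  congr 1
  congr 1
  apply Finset.sum_congr rfl; intro t _
  simp only [cOf]
  rw [dif_pos t.isLt]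

lemma probEvent_eq (B : Set X)
    (hcompat : ∀ (t : Fin M.T) (τ : Traj M),
      p.π t (histStates τ t) (histActs τ t) (τ.2 t) = piN ↑t (τ.1 t.castSucc) (τ.2 t)) :
    probEvent M p x0 (fun τ => τ.1 (Fin.last M.T) ∈ B)
      = pathSum M.T (wOf M piN) (fun _ _ _ => 0)
          (fun x => if x ∈ B then (1:ℝ) else 0) x0 := by
  rw [probEvent, pathSum, Fintype.sum_prod_type]
  apply Finset.sum_congr rfl; intro xs _
  apply Finset.sum_congr rfl; intro as _
  rw [trajProb_eq M p x0 piN hcompat (xs, as)]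
  by_cases hB : (xs, as).1 (Fin.last M.T) ∈ B <;> simp [hB]

end Bridge

section Formulas

variable (M : MDP X A) (p : HistPolicy M) (x0 : X) (piN : ℕ → X → A → ℝ)

lemma J_formula (hsum : ∀ t x, ∑ a : A, piN t x a = 1)
    (hcompat : ∀ (t : Fin M.T) (τ : Traj M),
      p.π t (histStates τ t) (histActs τ t) (τ.2 t) = piN ↑t (τ.1 t.castSucc) (τ.2 t)) :
    J M p x0 = (∑ t : Fin M.T, ∑ x : X, ∑ a : A,
        muF (wOf M piN) x0 ↑t x * piN ↑t x a * M.r t x a)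
      + ∑ x : X, muF (wOf M piN) x0 M.T x * M.rT x := by
  rw [J_eq M p x0 piN hcompat, master M.T _ (wOf_mass M piN hsum)]
  congr 1
  rw [← Fin.sum_univ_eq_sum_range (fun t => ∑ x : X, ∑ a : A,
    muF (wOf M piN) x0 t x * (∑ x' : X, wOf M piN t x a x') * cOf M t x a) M.T]
  apply Finset.sum_congr rfl; intro t _
  apply Finset.sum_congr rfl; intro x _
  apply Finset.sum_congr rfl; intro a _
  have h1 : ∑ x' : X, wOf M piN ↑t x a x' = piN ↑t x a := by
    simp only [wOf]
    rw [← Finset.mul_sum, M.P_sum, mul_one]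
  rw [h1]
  simp only [cOf]
  rw [dif_pos t.isLt]

lemma probEvent_formula (B : Set X) (hsum : ∀ t x, ∑ a : A, piN t x a = 1)
    (hcompat : ∀ (t : Fin M.T) (τ : Traj M),
      p.π t (histStates τ t) (histActs τ t) (τ.2 t) = piN ↑t (τ.1 t.castSucc) (τ.2 t)) :
    probEvent M p x0 (fun τ => τ.1 (Fin.last M.T) ∈ B)
      = ∑ x : X, if x ∈ B then muF (wOf M piN) x0 M.T x else 0 := by
  rw [probEvent_eq M p x0 piN B hcompat, master M.T _ (wOf_mass M piN hsum)]
  simp [mul_ite, mul_one, mul_zero]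

end Formulas

/-- The optimal value over Markov policies under a final-state
chance constraint equals the optimal value of the associated linear program
over occupation measures. -/
theorem markov_sup_eq_linear_program [Nonempty X] [Nonempty A]
    (M : MDP X A) (x0 : X) (B : Set X) (Δ : ℝ) (hΔ : Δ ∈ Set.Icc (0 : ℝ) 1) :
    sSup {v : ℝ | ∃ p : HistPolicy M, IsMarkov p ∧
        probEvent M p x0 (fun τ => τ.1 (Fin.last M.T) ∈ B) ≤ Δ ∧ v = J M p x0} =
    sSup {v : ℝ | ∃ (ρ : Fin M.T → X → A → ℝ) (ρT : X → ℝ),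
        (∀ (t : Fin M.T) (x : X) (a : A), ρ t x a ∈ Set.Icc (0 : ℝ) 1) ∧
        (∀ x : X, ρT x ∈ Set.Icc (0 : ℝ) 1) ∧
        (∀ x : X, ∑ a : A, ρ ⟨0, M.hT⟩ x a = if x = x0 then 1 else 0) ∧
        (∀ t : Fin M.T, 1 ≤ t.val → ∀ x : X,
          ∑ a : A, ρ t x a =
            ∑ x' : X, ∑ a : A,
              M.P x' a x * ρ ⟨t.val - 1, by have := t.isLt; omega⟩ x' a) ∧
        (∀ x : X, ρT x =
          ∑ x' : X, ∑ a : A,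
            M.P x' a x * ρ ⟨M.T - 1, by have := M.hT; omega⟩ x' a) ∧
        (∑ x : X, if x ∈ B then ρT x else 0) ≤ Δ ∧
        v = (∑ t : Fin M.T, ∑ x : X, ∑ a : A, M.r t x a * ρ t x a) +
              ∑ x : X, M.rT x * ρT x} := by
  congr 1
  ext v
  simp only [Set.mem_setOf_eq]
  constructor
  · -- policy to LP point
    rintro ⟨p, hp, hPc, rfl⟩
    set a0 : A := Classical.arbitrary A with ha0
    set piN : ℕ → X → A → ℝ := fun t x a =>
      if h : t < M.T then p.π ⟨t, h⟩ (fun _ => x) (fun _ => a0) a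
      else (if a = a0 then 1 else 0) with hpiN
    have hsum : ∀ t x, ∑ a : A, piN t x a = 1 := by
      intro t x
      by_cases h : t < M.T
      · simp only [hpiN, dif_pos h]
        exact p.sum_one _ _ _
      · simp only [hpiN, dif_neg h]
        rw [Finset.sum_ite_eq' Finset.univ a0 (fun _ => (1:ℝ))]
        simp
    have hnn : ∀ t x a, 0 ≤ piN t x a := by
      intro t x a
      by_cases h : t < M.T
      · simp only [hpiN, dif_pos h]; exact p.nonneg _ _ _ _
      · simp only [hpiN, dif_neg h]; split <;> norm_num
    have hcompat : ∀ (t : Fin M.T) (τ : Traj M),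
        p.π t (histStates τ t) (histActs τ t) (τ.2 t) = piN ↑t (τ.1 t.castSucc) (τ.2 t) := by
      intro t τ
      have h1 : piN ↑t (τ.1 t.castSucc) (τ.2 t)
          = p.π t (fun _ => τ.1 t.castSucc) (fun _ => a0) (τ.2 t) := by
        simp only [hpiN, dif_pos t.isLt]
      rw [h1]
      exact congrFun (hp t (histStates τ t) (fun _ => τ.1 t.castSucc)
        (histActs τ t) (fun _ => a0) (histStates_last τ t)) (τ.2 t)
    have hwnn : ∀ t x a x', 0 ≤ wOf M piN t x a x' :=
      fun t x a x' => mul_nonneg (hnn _ _ _) (M.P_nonneg _ _ _)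
    have hwmass := wOf_mass M piN hsum
    have hmunn := muF_nonneg (wOf M piN) hwnn x0
    have hmarg : ∀ t : ℕ, ∑ x : X, ∑ a : A, muF (wOf M piN) x0 t x * piN t x a = 1 := by
      intro t
      have : ∀ x : X, ∑ a : A, muF (wOf M piN) x0 t x * piN t x a
          = muF (wOf M piN) x0 t x := by
        intro x; rw [← Finset.mul_sum, hsum, mul_one]
      simp only [this]
      exact muF_mass (wOf M piN) hwmass x0 t
    refine ⟨fun t x a => muF (wOf M piN) x0 ↑t x * piN ↑t x a,
      fun x => muF (wOf M piN) x0 M.T x, ?_, ?_, ?_, ?_, ?_, ?_, ?_⟩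
    · intro t x a
      exact ⟨mul_nonneg (hmunn _ _) (hnn _ _ _),
        single_le_one_of_sum _ (fun x a => mul_nonneg (hmunn _ _) (hnn _ _ _))
          (hmarg ↑t) x a⟩
    · intro x
      refine ⟨hmunn _ _, ?_⟩
      calc muF (wOf M piN) x0 M.T x
          ≤ ∑ y : X, muF (wOf M piN) x0 M.T y :=
            Finset.single_le_sum (f := fun y => muF (wOf M piN) x0 M.T y)
              (fun y _ => hmunn _ _) (Finset.mem_univ x)
        _ = 1 := muF_mass (wOf M piN) hwmass x0 M.T
    · intro x
      rw [← Finset.mul_sum, hsum, mul_one]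
      rfl
    · intro t ht x
      obtain ⟨k, hk⟩ : ∃ k, (t : ℕ) = k + 1 := ⟨t.val - 1, by omega⟩
      rw [← Finset.mul_sum, hsum, mul_one]
      simp only [hk, Nat.add_sub_cancel]
      show ∑ x' : X, ∑ a : A, muF (wOf M piN) x0 k x' * wOf M piN k x' a x = _
      apply Finset.sum_congr rfl; intro x' _
      apply Finset.sum_congr rfl; intro a _
      simp only [wOf]
      ring
    · intro x
      obtain ⟨k, hk⟩ : ∃ k, M.T = k + 1 := ⟨M.T - 1, by have := M.hT; omega⟩
      have hk1 : M.T - 1 = k := by omega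
      simp only [hk1]
      show muF (wOf M piN) x0 M.T x = _
      rw [hk]
      show ∑ x' : X, ∑ a : A, muF (wOf M piN) x0 k x' * wOf M piN k x' a x = _
      apply Finset.sum_congr rfl; intro x' _
      apply Finset.sum_congr rfl; intro a _
      simp only [wOf]
      ring
    · rw [← probEvent_formula M p x0 piN B hsum hcompat]
      exact hPc
    · rw [J_formula M p x0 piN hsum hcompat]
      congr 1
      · apply Finset.sum_congr rfl; intro t _
        apply Finset.sum_congr rfl; intro x _
        apply Finset.sum_congr rfl; intro a _
        ring
      · apply Finset.sum_congr rfl; intro x _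
        ring
  · -- LP point to policy
    rintro ⟨ρ, ρT, hIcc, hIccT, h0, hrec, hfin, hchance, rfl⟩
    set a0 : A := Classical.arbitrary A with ha0
    set piN : ℕ → X → A → ℝ := fun t x a =>
      if h : t < M.T then
        (if (∑ b : A, ρ ⟨t, h⟩ x b) = 0 then (if a = a0 then 1 else 0)
         else ρ ⟨t, h⟩ x a / (∑ b : A, ρ ⟨t, h⟩ x b))
      else (if a = a0 then 1 else 0) with hpiN
    have hdfltsum : ∑ a : A, (if a = a0 then (1:ℝ) else 0) = 1 := by
      rw [Finset.sum_ite_eq' Finset.univ a0 (fun _ => (1:ℝ))]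
      simp
    have hsum : ∀ t x, ∑ a : A, piN t x a = 1 := by
      intro t x
      by_cases h : t < M.T
      · by_cases hS : (∑ b : A, ρ ⟨t, h⟩ x b) = 0
        · simp only [hpiN, dif_pos h, if_pos hS]
          exact hdfltsum
        · simp only [hpiN, dif_pos h, if_neg hS]
          rw [← Finset.sum_div, div_self hS]
      · simp only [hpiN, dif_neg h]
        exact hdfltsum
    have hnn : ∀ t x a, 0 ≤ piN t x a := by
      intro t x a
      by_cases h : t < M.T
      · by_cases hS : (∑ b : A, ρ ⟨t, h⟩ x b) = 0
        · simp only [hpiN, dif_pos h, if_pos hS]; split <;> norm_num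
        · simp only [hpiN, dif_pos h, if_neg hS]
          apply div_nonneg (hIcc _ _ _).1
          exact Finset.sum_nonneg fun b _ => (hIcc _ _ _).1
      · simp only [hpiN, dif_neg h]; split <;> norm_num
    have hprod : ∀ (t : Fin M.T) (x : X) (a : A),
        (∑ b : A, ρ t x b) * piN ↑t x a = ρ t x a := by
      intro t x a
      have hteq : (⟨↑t, t.isLt⟩ : Fin M.T) = t := Fin.eta t t.isLt
      by_cases hS : (∑ b : A, ρ t x b) = 0
      · have hz : ρ t x a = 0 :=
          (Finset.sum_eq_zero_iff_of_nonneg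
            (fun b _ => (hIcc t x b).1)).1 hS a (Finset.mem_univ a)
        rw [hS, hz, zero_mul]
      · have : piN ↑t x a = ρ t x a / (∑ b : A, ρ t x b) := by
          simp only [hpiN, dif_pos t.isLt, hteq, if_neg hS]
        rw [this, mul_comm, div_mul_cancel₀ _ hS]
    -- marginals agree with the LP variables
    have hmu : ∀ (k : ℕ) (h : k < M.T) (x : X),
        muF (wOf M piN) x0 k x = ∑ b : A, ρ ⟨k, h⟩ x b := by
      intro k
      induction k with
      | zero =>
        intro h x
        show (if x = x0 then (1:ℝ) else 0) = _
        exact (h0 x).symm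
      | succ k ih =>
        intro h x
        have hk : k < M.T := by omega
        have step : muF (wOf M piN) x0 (k+1) x
            = ∑ x' : X, ∑ a : A, M.P x' a x * ρ ⟨k, hk⟩ x' a := by
          show ∑ x' : X, ∑ a : A, muF (wOf M piN) x0 k x' * wOf M piN k x' a x = _
          apply Finset.sum_congr rfl; intro x' _
          apply Finset.sum_congr rfl; intro a _
          rw [ih hk x']
          simp only [wOf]
          have hp2 : (∑ b : A, ρ ⟨k, hk⟩ x' b) * piN k x' a = ρ ⟨k, hk⟩ x' a :=
            hprod ⟨k, hk⟩ x' a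
          calc (∑ b : A, ρ ⟨k, hk⟩ x' b) * (piN k x' a * M.P x' a x)
              = ((∑ b : A, ρ ⟨k, hk⟩ x' b) * piN k x' a) * M.P x' a x := by ring
            _ = ρ ⟨k, hk⟩ x' a * M.P x' a x := by rw [hp2]
            _ = M.P x' a x * ρ ⟨k, hk⟩ x' a := by ring
        have hr : ∑ a : A, ρ ⟨k+1, h⟩ x a
            = ∑ x' : X, ∑ a : A, M.P x' a x * ρ ⟨k, hk⟩ x' a :=
          hrec ⟨k+1, h⟩ (Nat.succ_le_succ (Nat.zero_le k)) x
        rw [step]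
        exact hr.symm
    have hmuT : ∀ x : X, muF (wOf M piN) x0 M.T x = ρT x := by
      intro x
      obtain ⟨k, hk⟩ : ∃ k, M.T = k + 1 := ⟨M.T - 1, by have := M.hT; omega⟩
      have hkT : k < M.T := by omega
      have hidx : (⟨M.T - 1, by have := M.hT; omega⟩ : Fin M.T) = ⟨k, hkT⟩ :=
        Fin.ext (by simp only; omega)
      have hfin' : ρT x = ∑ x' : X, ∑ a : A, M.P x' a x * ρ ⟨k, hkT⟩ x' a := by
        rw [hfin x, hidx]
      rw [hfin']
      conv_lhs => rw [hk]
      show ∑ x' : X, ∑ a : A, muF (wOf M piN) x0 k x' * wOf M piN k x' a x = _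
      apply Finset.sum_congr rfl; intro x' _
      apply Finset.sum_congr rfl; intro a _
      have hmuk : muF (wOf M piN) x0 k x' = ∑ b : A, ρ ⟨k, hkT⟩ x' b := hmu k hkT x'
      rw [hmuk]
      simp only [wOf]
      have hp2 : (∑ b : A, ρ ⟨k, hkT⟩ x' b) * piN k x' a = ρ ⟨k, hkT⟩ x' a :=
        hprod ⟨k, hkT⟩ x' a
      calc (∑ b : A, ρ ⟨k, hkT⟩ x' b) * (piN k x' a * M.P x' a x)
          = ((∑ b : A, ρ ⟨k, hkT⟩ x' b) * piN k x' a) * M.P x' a x := by ring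
        _ = ρ ⟨k, hkT⟩ x' a * M.P x' a x := by rw [hp2]
        _ = M.P x' a x * ρ ⟨k, hkT⟩ x' a := by ring
    -- the policy
    refine ⟨⟨fun t xs as a => piN ↑t (xs (Fin.last t.val)) a,
      fun t xs as a => hnn _ _ _, fun t xs as => hsum _ _⟩, ?_, ?_, ?_⟩
    · intro t xs xs' as as' hx
      funext a
      simp only [hx]
    · rw [probEvent_formula M _ x0 piN B hsum (fun t τ => rfl)]
      calc ∑ x : X, (if x ∈ B then muF (wOf M piN) x0 M.T x else 0)
          = ∑ x : X, (if x ∈ B then ρT x else 0) := by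
            apply Finset.sum_congr rfl; intro x _
            by_cases hB : x ∈ B <;> simp [hB, hmuT x]
        _ ≤ Δ := hchance
    · rw [J_formula M _ x0 piN hsum (fun t τ => rfl)]
      congr 1
      · apply Finset.sum_congr rfl; intro t _
        apply Finset.sum_congr rfl; intro x _
        apply Finset.sum_congr rfl; intro a _
        have h1 : muF (wOf M piN) x0 ↑t x * piN ↑t x a = ρ t x a := by
          have h2 : muF (wOf M piN) x0 ↑t x = ∑ b : A, ρ t x b := hmu ↑t t.isLt x
          rw [h2]
          exact hprod t x a
        rw [h1]
        ring
      · apply Finset.sum_congr rfl; intro x _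
        rw [hmuT x]
        ring

end
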